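/- For every r ∈ ℝ, every γ with 0 < γ ≤ 1, every τ ≥ 0 and every coefficient sequence f, one has Σ_{l∈ℤ}(1+l²)^r |Σ_{k₁+k₂=l} f̂_{k₁} f̂_{k₂} ∫₀^τ (e^{2isk₁k₂} − 1) ds|² ≤ 4 τ^{2+2γ} Σ_{l∈ℤ}(1+l²)^r (Σ_{k₁+k₂=l} (1+k₁²)^{γ/2} (1+k₂²)^{γ/2} |f̂_{k₁}| |f̂_{k₂}|)², whenever the right-hand side is finite. -/

import Mathlib

/-!
Interpolating `|e^{ix} - 1| = 2|sin (x/2)| ≤ 2 min 1 |x/2|` gives `|e^{ix} - 1| ≤ 2|x/2|^γ` for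
`0 ≤ γ ≤ 1`, so the phase `e^{2isk₁k₂} - 1` is at most `2 (s|k₁k₂|)^γ`. Integrating over `[0, τ]`
and using `|k|^γ ≤ (1 + k²)^{γ/2}` bounds each time integral by `2 τ^{1+γ} ⟨k₁⟩^γ ⟨k₂⟩^γ`; summing
over `k₁ + k₂ = l` and squaring gives the estimate frequency by frequency.
-/

open Complex

lemma Real.abs_sin_le_abs_rpow {γ : ℝ} (hγ0 : 0 ≤ γ) (hγ1 : γ ≤ 1) (y : ℝ) :
    |Real.sin y| ≤ |y| ^ γ := by
  rcases le_total |y| 1 with hy | hy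
  · exact Real.abs_sin_le_abs.trans (Real.self_le_rpow_of_le_one (abs_nonneg y) hy hγ1)
  · exact (Real.abs_sin_le_one y).trans (Real.one_le_rpow hy hγ0)

lemma Complex.norm_exp_I_mul_ofReal_sub_one_le_rpow {γ : ℝ} (hγ0 : 0 ≤ γ) (hγ1 : γ ≤ 1)
    (x : ℝ) : ‖exp (I * x) - 1‖ ≤ 2 * |x / 2| ^ γ := by
  rw [norm_exp_I_mul_ofReal_sub_one, norm_mul, Real.norm_ofNat, Real.norm_eq_abs]
  exact mul_le_mul_of_nonneg_left (Real.abs_sin_le_abs_rpow hγ0 hγ1 _) zero_le_two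

lemma Real.abs_rpow_le_one_add_sq_rpow_half {γ : ℝ} (hγ : 0 ≤ γ) (a : ℝ) :
    |a| ^ γ ≤ (1 + a ^ 2) ^ (γ / 2) := by
  rw [Real.rpow_div_two_eq_sqrt γ (by positivity)]
  exact Real.rpow_le_rpow (abs_nonneg a) (Real.abs_le_sqrt (by linarith)) hγ

lemma intervalIntegral.norm_integral_le_of_norm_le_mul_rpow {f : ℝ → ℂ} {C γ τ : ℝ}
    (hγ : -1 < γ) (hτ : 0 ≤ τ) (h : ∀ s ∈ Set.Ioc 0 τ, ‖f s‖ ≤ C * s ^ γ) :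
    ‖∫ s in (0 : ℝ)..τ, f s‖ ≤ C * (τ ^ (γ + 1) / (γ + 1)) := by
  calc ‖∫ s in (0 : ℝ)..τ, f s‖ ≤ ∫ s in (0 : ℝ)..τ, C * s ^ γ :=
        norm_integral_le_of_norm_le hτ (Filter.Eventually.of_forall h)
          ((intervalIntegral.intervalIntegrable_rpow' hγ).const_mul C)
    _ = C * (τ ^ (γ + 1) / (γ + 1)) := by
        rw [integral_const_mul, integral_rpow (Or.inl hγ),
          Real.zero_rpow (by linarith : γ + 1 ≠ 0), sub_zero]

lemma norm_integral_exp_sub_one_le {γ τ : ℝ} (hγ0 : 0 ≤ γ) (hγ1 : γ ≤ 1) (hτ : 0 ≤ τ)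
    (a b : ℝ) :
    ‖∫ s in (0 : ℝ)..τ, (exp (2 * I * s * a * b) - 1)‖
      ≤ 2 * τ ^ (1 + γ) * ((1 + a ^ 2) ^ (γ / 2) * (1 + b ^ 2) ^ (γ / 2)) := by
  have hpoint : ∀ s ∈ Set.Ioc 0 τ, ‖exp (2 * I * s * a * b) - 1‖ ≤ 2 * |a * b| ^ γ * s ^ γ := by
    intro s hs
    have hexp : (2 * I * s * a * b : ℂ) = I * ((2 * s * a * b : ℝ) : ℂ) := by push_cast; ring
    have habs : |2 * s * a * b / 2| = |a * b| * s := by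
      rw [show 2 * s * a * b / 2 = (a * b) * s by ring, abs_mul, abs_of_pos hs.1]
    calc ‖exp (2 * I * s * a * b) - 1‖ ≤ 2 * |2 * s * a * b / 2| ^ γ := by
          rw [hexp]; exact norm_exp_I_mul_ofReal_sub_one_le_rpow hγ0 hγ1 _
      _ = 2 * |a * b| ^ γ * s ^ γ := by
          rw [habs, Real.mul_rpow (abs_nonneg _) hs.1.le, mul_assoc]
  have hweight : |a * b| ^ γ ≤ (1 + a ^ 2) ^ (γ / 2) * (1 + b ^ 2) ^ (γ / 2) := by
    rw [abs_mul, Real.mul_rpow (abs_nonneg a) (abs_nonneg b)]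
    exact mul_le_mul (Real.abs_rpow_le_one_add_sq_rpow_half hγ0 a)
      (Real.abs_rpow_le_one_add_sq_rpow_half hγ0 b) (by positivity) (by positivity)
  have hdiv : τ ^ (γ + 1) / (γ + 1) ≤ τ ^ (1 + γ) := by
    rw [add_comm γ 1]
    exact div_le_self (by positivity) (by linarith)
  calc ‖∫ s in (0 : ℝ)..τ, (exp (2 * I * s * a * b) - 1)‖
      ≤ 2 * |a * b| ^ γ * (τ ^ (γ + 1) / (γ + 1)) :=
        intervalIntegral.norm_integral_le_of_norm_le_mul_rpow (by linarith) hτ hpoint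
    _ ≤ 2 * ((1 + a ^ 2) ^ (γ / 2) * (1 + b ^ 2) ^ (γ / 2)) * τ ^ (1 + γ) := by gcongr
    _ = 2 * τ ^ (1 + γ) * ((1 + a ^ 2) ^ (γ / 2) * (1 + b ^ 2) ^ (γ / 2)) := by ring

lemma tsum_mul_norm_sq_le_of_norm_le {ι E : Type*} [SeminormedAddCommGroup E]
    {W B : ι → ℝ} {A : ι → E} {C : ℝ} (hW : ∀ i, 0 ≤ W i) (hA : ∀ i, ‖A i‖ ≤ C * B i)
    (hB : Summable fun i => W i * B i ^ 2) :
    ∑' i, W i * ‖A i‖ ^ 2 ≤ C ^ 2 * ∑' i, W i * B i ^ 2 := by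
  have hle : ∀ i, W i * ‖A i‖ ^ 2 ≤ C ^ 2 * (W i * B i ^ 2) := fun i =>
    calc W i * ‖A i‖ ^ 2 ≤ W i * (C * B i) ^ 2 :=
          mul_le_mul_of_nonneg_left (pow_le_pow_left₀ (norm_nonneg _) (hA i) 2) (hW i)
      _ = C ^ 2 * (W i * B i ^ 2) := by ring
  have hB' := hB.mul_left (C ^ 2)
  rw [← tsum_mul_left]
  exact Summable.tsum_le_tsum hle
    (.of_nonneg_of_le (fun i => mul_nonneg (hW i) (sq_nonneg _)) hle hB') hB'

theorem P1_remainder_bound (r γ τ : ℝ) (hγ0 : 0 < γ) (hγ1 : γ ≤ 1) (hτ : 0 ≤ τ) (f : ℤ → ℂ)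
    (hinner : ∀ l : ℤ, Summable fun k : ℤ =>
      (1 + (k : ℝ) ^ 2) ^ (γ / 2) * (1 + ((l - k : ℤ) : ℝ) ^ 2) ^ (γ / 2) * ‖f k‖ * ‖f (l - k)‖)
    (houter : Summable fun l : ℤ => (1 + (l : ℝ) ^ 2) ^ r *
      (∑' k : ℤ, (1 + (k : ℝ) ^ 2) ^ (γ / 2) * (1 + ((l - k : ℤ) : ℝ) ^ 2) ^ (γ / 2) *
        ‖f k‖ * ‖f (l - k)‖) ^ 2) :
    ∑' l : ℤ, (1 + (l : ℝ) ^ 2) ^ r *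
        ‖∑' k : ℤ, f k * f (l - k) *
          ∫ s in (0:ℝ)..τ, (Complex.exp (2 * Complex.I * s * k * (l - k)) - 1)‖ ^ 2
      ≤ 4 * τ ^ (2 + 2 * γ) * ∑' l : ℤ, (1 + (l : ℝ) ^ 2) ^ r *
        (∑' k : ℤ, (1 + (k : ℝ) ^ 2) ^ (γ / 2) * (1 + ((l - k : ℤ) : ℝ) ^ 2) ^ (γ / 2) *
          ‖f k‖ * ‖f (l - k)‖) ^ 2 := by
  have hconv : ∀ l : ℤ, ‖∑' k : ℤ, f k * f (l - k) *
      ∫ s in (0:ℝ)..τ, (Complex.exp (2 * Complex.I * s * k * (l - k)) - 1)‖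
      ≤ 2 * τ ^ (1 + γ) * ∑' k : ℤ, (1 + (k : ℝ) ^ 2) ^ (γ / 2) *
        (1 + ((l - k : ℤ) : ℝ) ^ 2) ^ (γ / 2) * ‖f k‖ * ‖f (l - k)‖ := fun l =>
    tsum_of_norm_bounded ((hinner l).hasSum.mul_left _) fun k => by
      have hI := norm_integral_exp_sub_one_le hγ0.le hγ1 hτ k ((l - k : ℤ) : ℝ)
      push_cast at hI ⊢
      rw [norm_mul, norm_mul]
      calc _ ≤ ‖f k‖ * ‖f (l - k)‖ * (2 * τ ^ (1 + γ) *
            ((1 + (k : ℝ) ^ 2) ^ (γ / 2) * (1 + ((l : ℝ) - k) ^ 2) ^ (γ / 2))) := by gcongr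
        _ = _ := by ring
  have hconst : (2 * τ ^ (1 + γ)) ^ 2 = 4 * τ ^ (2 + 2 * γ) := by
    rw [mul_pow, ← Real.rpow_natCast (τ ^ (1 + γ)), ← Real.rpow_mul hτ]
    norm_num [add_mul, mul_comm]
  rw [← hconst]
  exact tsum_mul_norm_sq_le_of_norm_le (fun l => by positivity) hconv houter
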